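/- arXiv:2602.11449 — 5 statements merged into one kernel-verified Lean document; each statement's English description precedes it below -/
import Mathlib

section
/- If D and D' are real symmetric positive semidefinite p×p terminations such that D' − D is positive definite, then C_1(s; D') − C_1(s; D) is positive definite; that is, the value of the truncated matricial Stieltjes continued fraction is strictly Löwner-monotone in its termination. -/
open Matrix


/-- Tail values of the backward S-fraction recursion: `sfracTail m s γ γ̂ D k` is
`C_{m+1-k}`, where `C_{m+1} = D` and `C_i = (s·γ̂_i + (γ_i + C_{i+1})⁻¹)⁻¹`. -/
noncomputable def sfracTail {p : ℕ} (m : ℕ) (s : ℝ)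
    (γ γhat : ℕ → Matrix (Fin p) (Fin p) ℝ) (D : Matrix (Fin p) (Fin p) ℝ) :
    ℕ → Matrix (Fin p) (Fin p) ℝ
  | 0 => D
  | k + 1 => (s • γhat (m - k) + (γ (m - k) + sfracTail m s γ γhat D k)⁻¹)⁻¹

/-- The S-fraction value `C_i(s; D)`, `i = 1, …, m+1`, defined by the backward
recursion `C_{m+1} = D`, `C_i = (s·γ̂_i + (γ_i + C_{i+1})⁻¹)⁻¹`. -/
noncomputable def sfracC {p : ℕ} (m : ℕ) (s : ℝ)
    (γ γhat : ℕ → Matrix (Fin p) (Fin p) ℝ) (D : Matrix (Fin p) (Fin p) ℝ)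
    (i : ℕ) : Matrix (Fin p) (Fin p) ℝ :=
  sfracTail m s γ γhat D (m + 1 - i)

section Aux

variable {n : Type*} [Fintype n] [DecidableEq n]

lemma posDef_conj {A B : Matrix n n ℝ} (hA : A.PosDef) (hB : IsUnit B) :
    (Bᴴ * A * B).PosDef := by
  refine PosDef.of_dotProduct_mulVec_pos (isHermitian_conjTranspose_mul_mul B hA.isHermitian) fun x hx => ?_
  have hBx : B *ᵥ x ≠ 0 := fun h => hx (Matrix.mulVec_injective_iff_isUnit.2 hB (by simpa using h))
  have h2 := hA.dotProduct_mulVec_pos hBx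
  rw [show (Bᴴ * A * B) *ᵥ x = Bᵀ *ᵥ (A *ᵥ (B *ᵥ x)) by
    simp [← Matrix.mulVec_mulVec, Matrix.mul_assoc]]
  rw [star_trivial, Matrix.dotProduct_mulVec, Matrix.vecMul_transpose]
  simpa using h2

lemma inv_sub_inv_posDef {A B : Matrix n n ℝ} (hA : A.PosDef) (hB : B.PosDef)
    (hAB : (B - A).PosDef) : (A⁻¹ - B⁻¹).PosDef := by
  have hAd : IsUnit A.det := isUnit_iff_ne_zero.2 hA.det_pos.ne'
  have hBd : IsUnit B.det := isUnit_iff_ne_zero.2 hB.det_pos.ne'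
  have key : A⁻¹ - B⁻¹ = B⁻¹ᴴ * ((B - A)ᴴ * A⁻¹ * (B - A) + (B - A)) * B⁻¹ := by
    have hE : (B - A)ᴴ = B - A := hAB.isHermitian
    rw [hE]
    have h1 : (B - A) * A⁻¹ * (B - A) + (B - A) = B * A⁻¹ * B - B := by
      simp only [Matrix.sub_mul, Matrix.mul_sub, Matrix.mul_assoc,
        Matrix.mul_nonsing_inv_cancel_left _ _ hAd, Matrix.nonsing_inv_mul _ hAd,
        Matrix.nonsing_inv_mul_cancel_left _ _ hAd, Matrix.mul_one]
      abel
    rw [h1]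
    have hBi : B⁻¹ᴴ = B⁻¹ := by
      rw [conjTranspose_nonsing_inv, hB.isHermitian.eq]
    rw [hBi, Matrix.mul_sub, Matrix.sub_mul]
    simp only [Matrix.mul_assoc, Matrix.mul_nonsing_inv _ hBd, Matrix.mul_one,
      Matrix.nonsing_inv_mul_cancel_left _ _ hBd, Matrix.nonsing_inv_mul _ hBd,
      Matrix.one_mul]
  rw [key]
  exact posDef_conj ((posDef_conj hA.inv hAB.isUnit).add hAB) hB.inv.isUnit

lemma posDef_smul {A : Matrix n n ℝ} (hA : A.PosDef) {s : ℝ} (hs : 0 < s) :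
    (s • A).PosDef := by
  refine PosDef.of_dotProduct_mulVec_pos ?_ fun x hx => ?_
  · unfold Matrix.IsHermitian
    rw [conjTranspose_smul, hA.isHermitian.eq]
    simp
  rw [Matrix.smul_mulVec, dotProduct_smul]
  exact mul_pos hs (hA.dotProduct_mulVec_pos hx)

end Aux

lemma sfracTail_mono {p : ℕ} (m : ℕ) (s : ℝ) (hs : 0 < s)
    (γ γhat : ℕ → Matrix (Fin p) (Fin p) ℝ)
    (hγ : ∀ i, 1 ≤ i → i ≤ m → (γ i).PosDef)
    (hγhat : ∀ i, 1 ≤ i → i ≤ m → (γhat i).PosDef)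
    (D D' : Matrix (Fin p) (Fin p) ℝ)
    (hD : D.PosSemidef) (hD' : D'.PosSemidef) (hlt : (D' - D).PosDef) :
    ∀ k, k ≤ m → (sfracTail m s γ γhat D k).PosSemidef ∧
      (sfracTail m s γ γhat D' k).PosSemidef ∧
      (sfracTail m s γ γhat D' k - sfracTail m s γ γhat D k).PosDef := by
  intro k
  induction k with
  | zero => exact fun _ => ⟨hD, hD', hlt⟩
  | succ k ih =>
    intro hk
    obtain ⟨h1, h2, h3⟩ := ih (Nat.le_of_succ_le hk)
    have hi1 : 1 ≤ m - k := Nat.le_sub_of_add_le (by omega)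
    have hi2 : m - k ≤ m := Nat.sub_le _ _
    have hγi := hγ _ hi1 hi2
    have hγhi := hγhat _ hi1 hi2
    set T := sfracTail m s γ γhat D k
    set T' := sfracTail m s γ γhat D' k
    have hA : (γ (m - k) + T).PosDef := hγi.add_posSemidef h1
    have hA' : (γ (m - k) + T').PosDef := hγi.add_posSemidef h2
    have hdiff : ((γ (m - k) + T') - (γ (m - k) + T)).PosDef := by
      simpa using h3
    have hinv : ((γ (m - k) + T)⁻¹ - (γ (m - k) + T')⁻¹).PosDef :=
      inv_sub_inv_posDef hA hA' hdiff
    have hF : (s • γhat (m - k) + (γ (m - k) + T)⁻¹).PosDef :=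
      (posDef_smul hγhi hs).add hA.inv
    have hF' : (s • γhat (m - k) + (γ (m - k) + T')⁻¹).PosDef :=
      (posDef_smul hγhi hs).add hA'.inv
    have hFdiff : ((s • γhat (m - k) + (γ (m - k) + T)⁻¹) -
        (s • γhat (m - k) + (γ (m - k) + T')⁻¹)).PosDef := by
      simpa using hinv
    refine ⟨hF.inv.posSemidef, hF'.inv.posSemidef, ?_⟩
    show ((s • γhat (m - k) + (γ (m - k) + T')⁻¹)⁻¹ -
      (s • γhat (m - k) + (γ (m - k) + T)⁻¹)⁻¹).PosDef
    exact inv_sub_inv_posDef hF' hF hFdiff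

/-- **Strict Löwner monotonicity of the truncated matricial Stieltjes continued
fraction in its termination.** If `D, D'` are positive semidefinite terminations
with `D' − D` positive definite, then `C_1(s; D') − C_1(s; D)` is positive
definite. -/
theorem sfrac_strict_monotone_in_termination
    (p m : ℕ) (hp : 1 ≤ p) (hm : 1 ≤ m) (s : ℝ) (hs : 0 < s)
    (γ γhat : ℕ → Matrix (Fin p) (Fin p) ℝ)
    (hγ : ∀ i, 1 ≤ i → i ≤ m → (γ i).PosDef)
    (hγhat : ∀ i, 1 ≤ i → i ≤ m → (γhat i).PosDef)
    (D D' : Matrix (Fin p) (Fin p) ℝ)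
    (hD : D.PosSemidef) (hD' : D'.PosSemidef) (hlt : (D' - D).PosDef) :
    (sfracC m s γ γhat D' 1 - sfracC m s γ γhat D 1).PosDef := by
  have h := (sfracTail_mono m s hs γ γhat hγ hγhat D D' hD hD' hlt m le_rfl).2.2
  simpa [sfracC] using h
end

section
/- Let φ be a real symmetric positive definite p×p matrix and s > 0. Define the Gauss value F_m(s) = C_1(s; 0), the Kreĭn–Nudelman value F̂^φ_m(s) = C_1(s; (√s·φ)⁻¹), and the Gauss–Radau value F̃_m(s) = C̃_1, where C̃_m = (s·γ̂_m)⁻¹ and C̃_i = (s·γ̂_i + (γ_i + C̃_{i+1})⁻¹)⁻¹ for i = m−1, …, 1. Then F̂^φ_m(s) − F_m(s) is positive definite and F̃_m(s) − F̂^φ_m(s) is positive definite; in particular the two-sided Löwner bound F_m(s) ≤ F̂^φ_m(s) ≤ F̃_m(s) of Proposition 1, part 2, holds for every s ∈ ℝ₊. -/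
open Matrix


section Helpers

variable {n : Type*} [Fintype n] [DecidableEq n]

lemma my_smul_posDef {A : Matrix n n ℝ} (hA : A.PosDef) {c : ℝ} (hc : 0 < c) :
    (c • A).PosDef := by
  refine PosDef.of_dotProduct_mulVec_pos ?_ fun x hx => ?_
  · unfold Matrix.IsHermitian
    rw [conjTranspose_smul, hA.1.eq]
    simp
  · have := hA.dotProduct_mulVec_pos hx
    simp only [smul_mulVec, dotProduct_smul, smul_eq_mul]
    exact mul_pos hc this

lemma my_congr_posDef {A B : Matrix n n ℝ} (hA : A.PosDef) (hB : IsUnit B.det) :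
    (B * A * Bᴴ).PosDef := by
  refine PosDef.of_dotProduct_mulVec_pos (isHermitian_mul_mul_conjTranspose _ hA.1) fun x hx => ?_
  have hBT : IsUnit (Bᴴ).det := by
    rwa [conjTranspose_eq_transpose_of_trivial, det_transpose]
  have hBT' : IsUnit Bᴴ := (Matrix.isUnit_iff_isUnit_det _).mpr hBT
  have hy : Bᴴ *ᵥ x ≠ 0 := fun h =>
    hx (Matrix.mulVec_injective_iff_isUnit.mpr hBT' (by simpa using h))
  have hpos := hA.dotProduct_mulVec_pos hy
  have hrw : star x ⬝ᵥ ((B * A * Bᴴ) *ᵥ x) = star (Bᴴ *ᵥ x) ⬝ᵥ (A *ᵥ (Bᴴ *ᵥ x)) := by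
    simp only [star_trivial, ← mulVec_mulVec]
    rw [dotProduct_mulVec x B, ← mulVec_transpose, conjTranspose_eq_transpose_of_trivial]
  rw [hrw]
  exact hpos

/-- strict antitonicity of inverse -/
lemma my_inv_sub_inv_posDef {A B : Matrix n n ℝ} (hA : A.PosDef)
    (hBA : (B - A).PosDef) : (A⁻¹ - B⁻¹).PosDef := by
  have hB : B.PosDef := by
    have := hBA.add_posSemidef hA.posSemidef
    simpa using this
  have hAu : IsUnit A.det := isUnit_iff_ne_zero.mpr hA.det_pos.ne'
  have hBu : IsUnit B.det := isUnit_iff_ne_zero.mpr hB.det_pos.ne'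
  have h1 : A * A⁻¹ = 1 := Matrix.mul_nonsing_inv _ hAu
  have h2 : A⁻¹ * A = 1 := Matrix.nonsing_inv_mul _ hAu
  have h3 : B * B⁻¹ = 1 := Matrix.mul_nonsing_inv _ hBu
  have h4 : B⁻¹ * B = 1 := Matrix.nonsing_inv_mul _ hBu
  set C := B - A with hC
  have hkey : A⁻¹ - B⁻¹ = B⁻¹ * (C + C * A⁻¹ * C) * B⁻¹ := by
    have hBeq : B = A + C := by rw [hC]; abel
    have e1 : C * A⁻¹ * A = C := by rw [mul_assoc, h2, mul_one]
    have : B * A⁻¹ * B - B = C + C * A⁻¹ * C := by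
      rw [hBeq]
      simp only [add_mul, mul_add, h1, one_mul, e1]
      abel
    have hexp : B⁻¹ * (B * A⁻¹ * B - B) * B⁻¹ = A⁻¹ - B⁻¹ := by
      rw [mul_sub, sub_mul, h4, one_mul, mul_assoc B, Matrix.nonsing_inv_mul_cancel_left _ _ hBu,
        Matrix.mul_nonsing_inv_cancel_right _ _ hBu]
    rw [← hexp, this]
  rw [hkey]
  have hX : (C + C * A⁻¹ * C).PosDef := by
    have hCAC : (C * A⁻¹ * C).PosSemidef := by
      have := (hA.inv.posSemidef).conjTranspose_mul_mul_same C
      rwa [hBA.1.eq] at this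
    exact hBA.add_posSemidef hCAC
  have hBiu : IsUnit (B⁻¹).det := isUnit_iff_ne_zero.mpr hB.inv.det_pos.ne'
  have := my_congr_posDef hX hBiu
  rwa [hB.inv.1.eq] at this

/-- one step of the recursion, monotone + posdef -/
lemma my_step {γA γB A B : Matrix n n ℝ} (s : ℝ) (hs : 0 < s)
    (hγ : γA.PosDef) (hγh : γB.PosDef) (hA : A.PosSemidef) (hBA : (B - A).PosDef) :
    ((s • γB + (γA + A)⁻¹)⁻¹).PosDef ∧
    ((s • γB + (γA + B)⁻¹)⁻¹ - (s • γB + (γA + A)⁻¹)⁻¹).PosDef := by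
  have hsγ : (s • γB).PosDef := my_smul_posDef hγh hs
  have hγA : (γA + A).PosDef := hγ.add_posSemidef hA
  have hγB : (γA + B).PosDef := by
    have : γA + B = (B - A) + (γA + A) := by abel
    rw [this]; exact hBA.add_posSemidef hγA.posSemidef
  have hinv : ((γA + A)⁻¹ - (γA + B)⁻¹).PosDef := by
    refine my_inv_sub_inv_posDef hγA ?_
    have : γA + B - (γA + A) = B - A := by abel
    rwa [this]
  have hY : (s • γB + (γA + A)⁻¹).PosDef := hsγ.add_posSemidef hγA.inv.posSemidef
  have hX : (s • γB + (γA + B)⁻¹).PosDef := hsγ.add_posSemidef hγB.inv.posSemidef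
  refine ⟨hY.inv, ?_⟩
  refine my_inv_sub_inv_posDef hX ?_
  have : s • γB + (γA + A)⁻¹ - (s • γB + (γA + B)⁻¹) = (γA + A)⁻¹ - (γA + B)⁻¹ := by abel
  rwa [this]

end Helpers

/-- **Two-sided bound for the Kreĭn–Nudelman quadrature (Proposition 1, part 2).**
For `s > 0` and a symmetric positive definite parameter `φ`, with the Gauss value
`F_m(s) = C_1(s; 0)`, the Kreĭn–Nudelman value `F̂^φ_m(s) = C_1(s; (√s·φ)⁻¹)` and
the Gauss–Radau value `F̃_m(s)` (obtained from the modified recursion starting with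
`C̃_m = (s·γ̂_m)⁻¹`), the differences `F̂^φ_m(s) − F_m(s)` and `F̃_m(s) − F̂^φ_m(s)`
are positive definite; in particular `F_m(s) ≤ F̂^φ_m(s) ≤ F̃_m(s)` in the Löwner
order. -/
theorem krein_nudelman_two_sided_bound
    (p m : ℕ) (hp : 1 ≤ p) (hm : 1 ≤ m) (s : ℝ) (hs : 0 < s)
    (γ γhat : ℕ → Matrix (Fin p) (Fin p) ℝ)
    (hγ : ∀ i, 1 ≤ i → i ≤ m → (γ i).PosDef)
    (hγhat : ∀ i, 1 ≤ i → i ≤ m → (γhat i).PosDef)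
    (φ : Matrix (Fin p) (Fin p) ℝ) (hφ : φ.PosDef) :
    (sfracC m s γ γhat (Real.sqrt s • φ)⁻¹ 1 - sfracC m s γ γhat 0 1).PosDef ∧
      (sfracC (m - 1) s γ γhat ((s • γhat m)⁻¹) 1 -
          sfracC m s γ γhat (Real.sqrt s • φ)⁻¹ 1).PosDef ∧
      (sfracC m s γ γhat (Real.sqrt s • φ)⁻¹ 1 - sfracC m s γ γhat 0 1).PosSemidef ∧
      (sfracC (m - 1) s γ γhat ((s • γhat m)⁻¹) 1 -
          sfracC m s γ γhat (Real.sqrt s • φ)⁻¹ 1).PosSemidef := by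
  have hsqrt : (0:ℝ) < Real.sqrt s := Real.sqrt_pos.mpr hs
  have hD1 : ((Real.sqrt s • φ)⁻¹).PosDef := (my_smul_posDef hφ hsqrt).inv
  set D1 : Matrix (Fin p) (Fin p) ℝ := (Real.sqrt s • φ)⁻¹ with hD1def
  set E : Matrix (Fin p) (Fin p) ℝ := (s • γhat m)⁻¹ with hEdef
  -- Claim A: Gauss vs Kreĭn–Nudelman
  have claimA : ∀ k, k ≤ m → (sfracTail m s γ γhat 0 k).PosSemidef ∧
      (sfracTail m s γ γhat D1 k - sfracTail m s γ γhat 0 k).PosDef := by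
    intro k
    induction k with
    | zero =>
      intro _
      refine ⟨Matrix.PosSemidef.zero, ?_⟩
      simpa [sfracTail] using hD1
    | succ k ih =>
      intro hk
      obtain ⟨hPSD, hdiff⟩ := ih (Nat.le_of_succ_le hk)
      have h1 : 1 ≤ m - k := by omega
      have h2 : m - k ≤ m := by omega
      have hst := my_step s hs (hγ _ h1 h2) (hγhat _ h1 h2) hPSD hdiff
      exact ⟨by simpa [sfracTail] using hst.1.posSemidef, by simpa [sfracTail] using hst.2⟩
  -- Claim B: Kreĭn–Nudelman vs Gauss–Radau
  have claimB : ∀ k, k ≤ m - 1 → (sfracTail m s γ γhat D1 (k + 1)).PosSemidef ∧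
      (sfracTail (m - 1) s γ γhat E k - sfracTail m s γ γhat D1 (k + 1)).PosDef := by
    intro k
    induction k with
    | zero =>
      intro _
      have hγm := hγ m hm le_rfl
      have hγhm := hγhat m hm le_rfl
      have hsγ : (s • γhat m).PosDef := my_smul_posDef hγhm hs
      have hγD : (γ m + D1).PosDef := hγm.add_posSemidef hD1.posSemidef
      have hPD : ((s • γhat m + (γ m + D1)⁻¹)⁻¹).PosDef :=
        (hsγ.add_posSemidef hγD.inv.posSemidef).inv
      constructor
      · simpa [sfracTail] using hPD.posSemidef
      · have : ((s • γhat m)⁻¹ - (s • γhat m + (γ m + D1)⁻¹)⁻¹).PosDef := by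
          refine my_inv_sub_inv_posDef hsγ ?_
          simpa using hγD.inv
        simpa [sfracTail, hEdef] using this
    | succ k ih =>
      intro hk
      obtain ⟨hPSD, hdiff⟩ := ih (Nat.le_of_succ_le hk)
      have h1 : 1 ≤ m - (k + 1) := by omega
      have h2 : m - (k + 1) ≤ m := by omega
      have hidx : m - 1 - k = m - (k + 1) := by omega
      have hst := my_step s hs (hγ _ h1 h2) (hγhat _ h1 h2) hPSD hdiff
      constructor
      · simpa [sfracTail] using hst.1.posSemidef
      · simp only [sfracTail]
        rw [hidx]
        exact hst.2
  have hA := claimA m le_rfl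
  have hB := claimB (m - 1) le_rfl
  have hmm : m - 1 + 1 = m := by omega
  rw [hmm] at hB
  have e1 : sfracC m s γ γhat D1 1 = sfracTail m s γ γhat D1 m := by
    simp [sfracC]
  have e2 : sfracC m s γ γhat 0 1 = sfracTail m s γ γhat 0 m := by
    simp [sfracC]
  have e3 : sfracC (m - 1) s γ γhat E 1 = sfracTail (m - 1) s γ γhat E (m - 1) := by
    simp [sfracC]
  rw [e1, e2, e3]
  exact ⟨hA.2, hB.2, hA.2.posSemidef, hB.2.posSemidef⟩
end

section
/- Let 1 ≤ k ≤ m and suppose the real p×p matrices U_{k−1}, U_k, …, U_{m+1} satisfy the block Stieltjes string equations γ_{i−1}⁻¹(U_i − U_{i−1}) − γ_i⁻¹(U_{i+1} − U_i) + s·γ̂_i·U_i = 0 for i = k, …, m together with the Dirichlet condition U_{m+1} = 0. Then for every i = k, …, m one has U_i = −C_i(s; 0)·γ_{i−1}⁻¹·(U_i − U_{i−1}); that is, each Gauss S-fraction tail C_i(s; 0) is the block Neumann-to-Dirichlet map of the truncated block Stieltjes string (equation (B.6) in the proof of the Appendix-B Proposition). -/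
open Matrix


lemma posDef_smul' {n : Type*} [Fintype n] {M : Matrix n n ℝ} (hM : M.PosDef)
    {c : ℝ} (hc : 0 < c) : (c • M).PosDef := by
  refine ⟨?_, fun x hx => ?_⟩
  · unfold Matrix.IsHermitian
    rw [conjTranspose_smul, hM.1.eq]
    norm_num
  · exact (hM.smul hc).2 hx

lemma sfracTail_posSemidef {p m : ℕ} {s : ℝ} (hs : 0 < s)
    {γ γhat : ℕ → Matrix (Fin p) (Fin p) ℝ}
    (hγ : ∀ i, i ≤ m → (γ i).PosDef)
    (hγhat : ∀ i, 1 ≤ i → i ≤ m → (γhat i).PosDef) :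
    ∀ j, j ≤ m → (sfracTail m s γ γhat 0 j).PosSemidef ∧
      (1 ≤ j → (sfracTail m s γ γhat 0 j).PosDef) := by
  intro j
  induction j with
  | zero => intro _; exact ⟨Matrix.PosSemidef.zero, by omega⟩
  | succ n ih =>
    intro hn1
    have hsemi := (ih (by omega)).1
    have h1 : 1 ≤ m - n := by omega
    have h2 : m - n ≤ m := by omega
    have hpd : (sfracTail m s γ γhat 0 (n+1)).PosDef := by
      show ((s • γhat (m - n) + (γ (m - n) + sfracTail m s γ γhat 0 n)⁻¹)⁻¹).PosDef
      exact ((posDef_smul' (hγhat _ h1 h2) hs).add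
        ((hγ _ h2).add_posSemidef hsemi).inv).inv
    exact ⟨hpd.posSemidef, fun _ => hpd⟩


/-- **The Gauss S-fraction tails are the Neumann-to-Dirichlet maps of the
truncated block Stieltjes string (equation (B.6)).** If `U_{k−1}, …, U_{m+1}`
satisfy the block Stieltjes string equations for `i = k, …, m` together with the
Dirichlet condition `U_{m+1} = 0`, then for every `i = k, …, m`,
`U_i = −C_i(s; 0)·γ_{i−1}⁻¹·(U_i − U_{i−1})`. -/
theorem sfrac_tail_neumann_to_dirichlet
    (p m k : ℕ) (hp : 1 ≤ p) (hk : 1 ≤ k) (hkm : k ≤ m) (s : ℝ) (hs : 0 < s)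
    (γ γhat : ℕ → Matrix (Fin p) (Fin p) ℝ)
    (hγ : ∀ i, i ≤ m → (γ i).PosDef)
    (hγhat : ∀ i, 1 ≤ i → i ≤ m → (γhat i).PosDef)
    (U : ℕ → Matrix (Fin p) (Fin p) ℝ)
    (hstring : ∀ i, k ≤ i → i ≤ m →
      (γ (i - 1))⁻¹ * (U i - U (i - 1)) - (γ i)⁻¹ * (U (i + 1) - U i)
        + s • (γhat i * U i) = 0)
    (hdir : U (m + 1) = 0) :
    ∀ i, k ≤ i → i ≤ m →
      U i = -(sfracC m s γ γhat 0 i * ((γ (i - 1))⁻¹ * (U i - U (i - 1)))) := by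
  -- key step lemma
  have key : ∀ i, k ≤ i → i ≤ m →
      (γ i)⁻¹ * (U (i + 1) - U i) = -((γ i + sfracC m s γ γhat 0 (i+1))⁻¹ * U i) →
      U i = -(sfracC m s γ γhat 0 i * ((γ (i - 1))⁻¹ * (U i - U (i - 1)))) := by
    intro i hki him hV
    set Ci1 := sfracC m s γ γhat 0 (i+1) with hCi1
    have hCi1semi : Ci1.PosSemidef := by
      rw [hCi1]
      unfold sfracC
      exact (sfracTail_posSemidef hs hγ hγhat (m + 1 - (i+1)) (by omega)).1
    set M := s • γhat i + (γ i + Ci1)⁻¹ with hM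
    have hMpd : M.PosDef :=
      (posDef_smul' (hγhat i (by omega) him) hs).add
        (((hγ i him).add_posSemidef hCi1semi).inv)
    have hCi : sfracC m s γ γhat 0 i = M⁻¹ := by
      unfold sfracC
      have : m + 1 - i = (m - i) + 1 := by omega
      rw [this]
      show (s • γhat (m - (m - i)) + (γ (m - (m - i)) + sfracTail m s γ γhat 0 (m - i))⁻¹)⁻¹ = M⁻¹
      have h2 : m - (m - i) = i := by omega
      have h3 : m - i = m + 1 - (i + 1) := by omega
      rw [h2, h3, hM, hCi1]
      rfl
    -- string equation at i
    have hstr := hstring i hki him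
    rw [hV] at hstr
    -- hstr : (γ (i-1))⁻¹ * (U i - U (i-1)) - (-((γ i + Ci1)⁻¹ * U i)) + s • (γhat i * U i) = 0
    have hMU : M * U i = -((γ (i - 1))⁻¹ * (U i - U (i - 1))) := by
      rw [hM]
      rw [add_mul, smul_mul_assoc]
      have : (γ i + Ci1)⁻¹ * U i + s • (γhat i * U i) =
          -((γ (i - 1))⁻¹ * (U i - U (i - 1))) := by
        have := hstr
        linear_combination (norm := noncomm_ring) this
      linear_combination (norm := noncomm_ring) this
    have hcanc : M⁻¹ * (M * U i) = U i :=
      Matrix.nonsing_inv_mul_cancel_left _ _ (isUnit_iff_ne_zero.mpr hMpd.det_pos.ne')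
    rw [hCi, ← Matrix.mul_neg, ← hMU, hcanc]
  -- downward induction on m - i
  have main : ∀ d i, k ≤ i → i ≤ m → m - i = d →
      U i = -(sfracC m s γ γhat 0 i * ((γ (i - 1))⁻¹ * (U i - U (i - 1)))) := by
    intro d
    induction d with
    | zero =>
      intro i hki him hd
      have him' : i = m := by omega
      apply key i hki him
      have hC : sfracC m s γ γhat 0 (i + 1) = 0 := by
        unfold sfracC
        have h0 : m + 1 - (i + 1) = 0 := by omega
        rw [h0]; rfl
      have hU1 : U (i + 1) = 0 := by rw [show i + 1 = m + 1 by omega]; exact hdir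
      rw [hC, add_zero, hU1, zero_sub, Matrix.mul_neg]
    | succ n ih =>
      intro i hki him hd
      have hi1m : i + 1 ≤ m := by omega
      have hUi1 := ih (i + 1) (by omega) hi1m (by omega)
      apply key i hki him
      -- from hUi1 : U (i+1) = -(C_{i+1} * ((γ i)⁻¹ * (U (i+1) - U i)))
      have hsimp : i + 1 - 1 = i := by omega
      rw [hsimp] at hUi1
      set Ci1 := sfracC m s γ γhat 0 (i+1) with hCi1
      set V := (γ i)⁻¹ * (U (i + 1) - U i) with hVdef
      have hCi1pd : Ci1.PosSemidef := by
        rw [hCi1]; unfold sfracC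
        exact (sfracTail_posSemidef hs hγ hγhat (m + 1 - (i+1)) (by omega)).1
      have hγiUnit : IsUnit (γ i).det :=
        isUnit_iff_ne_zero.mpr (hγ i him).det_pos.ne'
      have hγV : γ i * V = U (i + 1) - U i := by
        rw [hVdef, Matrix.mul_nonsing_inv_cancel_left _ _ hγiUnit]
      have hUi : U i = -((γ i + Ci1) * V) := by
        have h1 : U i = U (i + 1) - γ i * V := by rw [hγV]; abel
        rw [h1, hUi1, add_mul]
        abel
      have hsum : (γ i + Ci1).PosDef := (hγ i him).add_posSemidef hCi1pd
      rw [hUi, Matrix.mul_neg, Matrix.nonsing_inv_mul_cancel_left _ _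
        (isUnit_iff_ne_zero.mpr hsum.det_pos.ne'), neg_neg, hVdef]
  intro i hki him
  exact main (m - i) i hki him rfl
end

section
/- Suppose the real p×p matrices U_0, U_1, …, U_{m+1} satisfy the block Neumann condition γ_0⁻¹(U_1 − U_0) = −I_p, the block Stieltjes string equations γ_{i−1}⁻¹(U_i − U_{i−1}) − γ_i⁻¹(U_{i+1} − U_i) + s·γ̂_i·U_i = 0 for i = 1, …, m, and the block Dirichlet condition U_{m+1} = 0. Then U_1 = C_1(s; 0); that is, the block Gauss quadrature, which is the first block of the solution of the block Stieltjes string system, equals the truncated matricial Stieltjes continued fraction (the Proposition of Appendix B, in string form). -/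
open Matrix


lemma myPosDef_add {p : ℕ} {A B : Matrix (Fin p) (Fin p) ℝ}
    (hA : A.PosDef) (hB : B.PosDef) : (A + B).PosDef :=
  ⟨hA.1.add hB.1, fun x hx => by
    exact (hA.add hB).2 hx⟩

lemma myPosDef_smul {p : ℕ} {A : Matrix (Fin p) (Fin p) ℝ} {c : ℝ}
    (hA : A.PosDef) (hc : 0 < c) : (c • A).PosDef :=
  ⟨by
      unfold Matrix.IsHermitian
      rw [conjTranspose_smul, hA.1]
      simp,
    fun x hx => by
      exact (hA.smul hc).2 hx⟩

/-- **The block Gauss quadrature equals the truncated matricial Stieltjes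
continued fraction (Proposition of Appendix B, string form).** If `U_0, …, U_{m+1}`
satisfy the block Neumann condition `γ_0⁻¹(U_1 − U_0) = −I_p`, the block Stieltjes
string equations for `i = 1, …, m`, and the block Dirichlet condition
`U_{m+1} = 0`, then `U_1 = C_1(s; 0)`. -/
theorem gauss_quadrature_eq_sfraction
    (p m : ℕ) (hp : 1 ≤ p) (hm : 1 ≤ m) (s : ℝ) (hs : 0 < s)
    (γ γhat : ℕ → Matrix (Fin p) (Fin p) ℝ)
    (hγ : ∀ i, i ≤ m → (γ i).PosDef)
    (hγhat : ∀ i, 1 ≤ i → i ≤ m → (γhat i).PosDef)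
    (U : ℕ → Matrix (Fin p) (Fin p) ℝ)
    (hneu : (γ 0)⁻¹ * (U 1 - U 0) = -(1 : Matrix (Fin p) (Fin p) ℝ))
    (hstring : ∀ i, 1 ≤ i → i ≤ m →
      (γ (i - 1))⁻¹ * (U i - U (i - 1)) - (γ i)⁻¹ * (U (i + 1) - U i)
        + s • (γhat i * U i) = 0)
    (hdir : U (m + 1) = 0) :
    U 1 = sfracC m s γ γhat 0 1 := by
  set T : ℕ → Matrix (Fin p) (Fin p) ℝ := sfracTail m s γ γhat 0 with hTdef
  have hTsucc : ∀ k, T (k + 1) = (s • γhat (m - k) + (γ (m - k) + T k)⁻¹)⁻¹ :=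
    fun k => rfl
  -- positive definiteness of γ (m-k) + T k for k < m, and k = 0 case up to m
  have hA : ∀ k, k ≤ m → (γ (m - k) + T k).PosDef := by
    intro k
    induction k with
    | zero =>
      intro _
      have : T 0 = 0 := rfl
      rw [this, add_zero]
      exact hγ m le_rfl
    | succ k ih =>
      intro hk
      have hk' : k ≤ m := Nat.le_of_succ_le hk
      have h1 : 1 ≤ m - k := by omega
      have hApd := ih hk'
      have hTpd : (T (k + 1)).PosDef := by
        rw [hTsucc]
        exact (myPosDef_add (myPosDef_smul (hγhat (m - k) h1 (by omega)) hs)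
          hApd.inv).inv
      exact myPosDef_add (hγ (m - (k + 1)) (by omega)) hTpd
  -- the "slopes" W
  set W : ℕ → Matrix (Fin p) (Fin p) ℝ :=
    fun i => (γ (i - 1))⁻¹ * (U (i - 1) - U i) with hWdef
  have hW1 : W 1 = 1 := by
    have : W 1 = (γ 0)⁻¹ * (U 0 - U 1) := rfl
    rw [this, ← neg_sub (U 1) (U 0), mul_neg, hneu, neg_neg]
  have hWrec : ∀ i, 1 ≤ i → i ≤ m →
      W (i + 1) = W i - s • (γhat i * U i) := by
    intro i hi1 him
    have h := hstring i hi1 him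
    have hA1 : (γ (i - 1))⁻¹ * (U i - U (i - 1)) = -(W i) := by
      rw [hWdef]
      rw [← neg_sub (U (i-1)) (U i), mul_neg]
    have hA2 : (γ i)⁻¹ * (U (i + 1) - U i) = -(W (i + 1)) := by
      have : W (i + 1) = (γ i)⁻¹ * (U i - U (i + 1)) := by
        simp [hWdef]
      rw [this, ← neg_sub (U i) (U (i+1)), mul_neg]
    rw [hA1, hA2, sub_neg_eq_add] at h
    -- h : -(W i) + W (i+1) + s • (γhat i * U i) = 0
    have := eq_neg_of_add_eq_zero_left h
    -- this : -(W i) + W (i+1) = -(s • (γhat i * U i))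
    have h2 : W (i + 1) = W i - s • (γhat i * U i) := by
      have := congrArg (fun X => W i + X) this
      simp only [← add_assoc, add_neg_cancel, zero_add] at this
      rw [this]; abel
    exact h2
  have hγW : ∀ i, i ≤ m → γ i * W (i + 1) = U i - U (i + 1) := by
    intro i him
    have : W (i + 1) = (γ i)⁻¹ * (U i - U (i + 1)) := by simp [hWdef]
    rw [this, ← mul_assoc, mul_nonsing_inv _ (hγ i him).det_pos.ne'.isUnit,
      one_mul]
  -- main induction
  have hMain : ∀ k, k ≤ m → U (m + 1 - k) = T k * W (m + 1 - k) := by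
    intro k
    induction k with
    | zero =>
      intro _
      have : T 0 = 0 := rfl
      simp [this, hdir]
    | succ k ih =>
      intro hk
      have hk' : k ≤ m := Nat.le_of_succ_le hk
      set i := m - k with hi
      have hi1 : 1 ≤ i := by omega
      have him : i ≤ m := by omega
      have e1 : m + 1 - (k + 1) = i := by omega
      have e2 : m + 1 - k = i + 1 := by omega
      have IH : U (i + 1) = T k * W (i + 1) := by rw [← e2]; exact ih hk'
      have hUi : U i = (γ i + T k) * W (i + 1) := by
        rw [add_mul, hγW i him, ← IH]; abel
      have hApd : (γ i + T k).PosDef := hA k hk'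
      have h2 : (γ i + T k)⁻¹ * U i = W (i + 1) := by
        rw [hUi, ← mul_assoc, nonsing_inv_mul _ hApd.det_pos.ne'.isUnit, one_mul]
      have h3 : (s • γhat i + (γ i + T k)⁻¹) * U i = W i := by
        rw [add_mul, h2, hWrec i hi1 him, smul_mul_assoc]
        abel
      have hMpd : ((s • γhat i + (γ i + T k)⁻¹)).PosDef :=
        myPosDef_add (myPosDef_smul (hγhat i hi1 him) hs) hApd.inv
      have hTk1 : T (k + 1) = (s • γhat i + (γ i + T k)⁻¹)⁻¹ := hTsucc k
      rw [e1, hTk1, ← h3, ← mul_assoc,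
        nonsing_inv_mul _ hMpd.det_pos.ne'.isUnit, one_mul]
  have := hMain m le_rfl
  simp only [Nat.add_sub_cancel_left] at this
  rw [this, hW1, mul_one]
  show T m = sfracTail m s γ γhat 0 (m + 1 - 1)
  simp [hTdef]
end

section
/- Let φ be a real symmetric positive definite p×p matrix and s > 0. Then the function t ↦ C_1(s; (t·√s)⁻¹·φ⁻¹), defined for t > 0, tends, as t → 0⁺, to the Gauss–Radau value C̃_1 defined by the modified recursion C̃_m = (s·γ̂_m)⁻¹ and C̃_i = (s·γ̂_i + (γ_i + C̃_{i+1})⁻¹)⁻¹ for i = m−1, …, 1; that is, lim_{φ→0} F̂^φ_m(s) = F̃_m(s): in the limit of vanishing Kreĭn–Nudelman damping the Kreĭn–Nudelman quadrature reduces to the block Gauss–Radau quadrature (equation (3.10)). -/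
open Matrix Filter


lemma my_posdef_smul {p : ℕ} {c : ℝ} (hc : 0 < c) {A : Matrix (Fin p) (Fin p) ℝ}
    (hA : A.PosDef) : (c • A).PosDef := by
  refine ⟨?_, fun x hx => ?_⟩
  · unfold Matrix.IsHermitian
    rw [conjTranspose_smul, hA.1.eq]
    simp
  · exact (hA.smul hc).2 hx

lemma my_contAt_inv {p : ℕ} (A : Matrix (Fin p) (Fin p) ℝ) (h : A.det ≠ 0) :
    ContinuousAt Inv.inv A := by
  refine continuousAt_matrix_inv A ?_
  have : (Ring.inverse : ℝ → ℝ) = Inv.inv := Ring.inverse_eq_inv'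
  rw [this]
  exact continuousAt_inv₀ h

/-- Positive-definiteness and continuity of the tail map, by induction on the depth. -/
lemma sfracTail_posDef_contAt {p : ℕ} (s : ℝ) (hs : 0 < s)
    (γ γhat : ℕ → Matrix (Fin p) (Fin p) ℝ) (n : ℕ) :
    ∀ k : ℕ, (∀ j < k, (γ (n - j)).PosDef) → (∀ j < k, (γhat (n - j)).PosDef) →
    ∀ X : Matrix (Fin p) (Fin p) ℝ, X.PosDef →
    (sfracTail n s γ γhat X k).PosDef ∧
      ContinuousAt (fun Y => sfracTail n s γ γhat Y k) X := by
  intro k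
  induction k with
  | zero =>
    intro _ _ X hX
    exact ⟨hX, continuousAt_id⟩
  | succ k ih =>
    intro h1 h2 X hX
    obtain ⟨hPD, hC⟩ := ih (fun j hj => h1 j (Nat.lt_succ_of_lt hj))
      (fun j hj => h2 j (Nat.lt_succ_of_lt hj)) X hX
    have hγk : (γ (n - k)).PosDef := h1 k (Nat.lt_succ_self k)
    have hγhk : (γhat (n - k)).PosDef := h2 k (Nat.lt_succ_self k)
    have hinner : (γ (n - k) + sfracTail n s γ γhat X k).PosDef := hγk.add hPD
    have houter : (s • γhat (n - k) + (γ (n - k) + sfracTail n s γ γhat X k)⁻¹).PosDef :=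
      (my_posdef_smul hs hγhk).add hinner.inv
    constructor
    · exact houter.inv
    · show ContinuousAt
        (fun Y => (s • γhat (n - k) + (γ (n - k) + sfracTail n s γ γhat Y k)⁻¹)⁻¹) X
      have c1 : ContinuousAt (fun Y => γ (n - k) + sfracTail n s γ γhat Y k) X :=
        continuousAt_const.add hC
      have c2 : ContinuousAt (fun Y => (γ (n - k) + sfracTail n s γ γhat Y k)⁻¹) X :=
        ContinuousAt.comp (x := X)
          (f := fun Y => γ (n - k) + sfracTail n s γ γhat Y k)
          (my_contAt_inv _ hinner.det_pos.ne') c1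
      have c3 : ContinuousAt
          (fun Y => s • γhat (n - k) + (γ (n - k) + sfracTail n s γ γhat Y k)⁻¹) X :=
        continuousAt_const.add c2
      exact ContinuousAt.comp (x := X)
        (f := fun Y => s • γhat (n - k) + (γ (n - k) + sfracTail n s γ γhat Y k)⁻¹)
        (my_contAt_inv _ houter.det_pos.ne') c3

/-- Peeling off the innermost step of the recursion. -/
lemma sfracTail_shift {p : ℕ} (s : ℝ) (γ γhat : ℕ → Matrix (Fin p) (Fin p) ℝ)
    (m : ℕ) (hm : 1 ≤ m) (D : Matrix (Fin p) (Fin p) ℝ) :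
    ∀ k : ℕ, sfracTail m s γ γhat D (k + 1) =
      sfracTail (m - 1) s γ γhat ((s • γhat m + (γ m + D)⁻¹)⁻¹) k := by
  intro k
  induction k with
  | zero => simp [sfracTail]
  | succ k ih =>
    show (s • γhat (m - (k + 1)) + (γ (m - (k + 1)) + sfracTail m s γ γhat D (k + 1))⁻¹)⁻¹ =
      (s • γhat (m - 1 - k) + (γ (m - 1 - k) +
        sfracTail (m - 1) s γ γhat ((s • γhat m + (γ m + D)⁻¹)⁻¹) k)⁻¹)⁻¹
    have e : m - (k + 1) = m - 1 - k := by omega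
    rw [ih, e]

lemma my_inv_smul {p : ℕ} {c : ℝ} (hc : c ≠ 0) {A : Matrix (Fin p) (Fin p) ℝ}
    (h : IsUnit A.det) : (c⁻¹ • A)⁻¹ = c • A⁻¹ := by
  have := Matrix.inv_smul' (A := A) (Units.mk0 c⁻¹ (inv_ne_zero hc)) h
  simpa [Units.smul_def] using this

/-- **Vanishing-damping limit of the Kreĭn–Nudelman quadrature (equation (3.10)).**
For `s > 0` and a symmetric positive definite `φ`, the Kreĭn–Nudelman value with
parameter `t·φ`, namely `C_1(s; (t·√s)⁻¹·φ⁻¹)`, tends as `t → 0⁺` to the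
Gauss–Radau value `C̃_1` defined by the modified recursion `C̃_m = (s·γ̂_m)⁻¹`,
`C̃_i = (s·γ̂_i + (γ_i + C̃_{i+1})⁻¹)⁻¹`: `lim_{φ→0} F̂^φ_m(s) = F̃_m(s)`. -/
theorem krein_nudelman_limit_gauss_radau
    (p m : ℕ) (hp : 1 ≤ p) (hm : 1 ≤ m) (s : ℝ) (hs : 0 < s)
    (γ γhat : ℕ → Matrix (Fin p) (Fin p) ℝ)
    (hγ : ∀ i, 1 ≤ i → i ≤ m → (γ i).PosDef)
    (hγhat : ∀ i, 1 ≤ i → i ≤ m → (γhat i).PosDef)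
    (φ : Matrix (Fin p) (Fin p) ℝ) (hφ : φ.PosDef) :
    Tendsto (fun t : ℝ => sfracC m s γ γhat ((t * Real.sqrt s)⁻¹ • φ⁻¹) 1)
      (nhdsWithin 0 (Set.Ioi 0))
      (nhds (sfracC (m - 1) s γ γhat ((s • γhat m)⁻¹) 1)) := by
  have hγm : (γ m).PosDef := hγ m hm le_rfl
  have hγhm : (γhat m).PosDef := hγhat m hm le_rfl
  have hsqs : (0:ℝ) < Real.sqrt s := Real.sqrt_pos.mpr hs
  -- h is the outer (m-1)-step map
  set h : Matrix (Fin p) (Fin p) ℝ → Matrix (Fin p) (Fin p) ℝ :=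
    fun X => sfracTail (m - 1) s γ γhat X (m - 1) with hh
  -- the limiting termination
  have hL : ((s • γhat m)⁻¹ : Matrix (Fin p) (Fin p) ℝ).PosDef :=
    (my_posdef_smul hs hγhm).inv
  -- continuity of h at the limit point, with PD hypotheses
  have hcont : ContinuousAt h ((s • γhat m)⁻¹) := by
    refine (sfracTail_posDef_contAt s hs γ γhat (m - 1) (m - 1)
      (fun j hj => hγ (m - 1 - j) (by omega) (by omega))
      (fun j hj => hγhat (m - 1 - j) (by omega) (by omega))
      _ hL).2
  -- D'(t) tends to the limiting termination
  have hD' : Tendsto (fun t : ℝ =>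
      (s • γhat m + (γ m + (t * Real.sqrt s)⁻¹ • φ⁻¹)⁻¹)⁻¹)
      (nhdsWithin 0 (Set.Ioi 0)) (nhds ((s • γhat m)⁻¹)) := by
    -- inner inverse tends to 0
    have hinner : Tendsto (fun t : ℝ => (γ m + (t * Real.sqrt s)⁻¹ • φ⁻¹)⁻¹)
        (nhdsWithin 0 (Set.Ioi 0)) (nhds 0) := by
      have key : ∀ t ∈ Set.Ioi (0:ℝ),
          (γ m + (t * Real.sqrt s)⁻¹ • φ⁻¹)⁻¹ =
          (t * Real.sqrt s) • ((t * Real.sqrt s) • γ m + φ⁻¹)⁻¹ := by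
        intro t ht
        have hc : (0:ℝ) < t * Real.sqrt s := mul_pos ht hsqs
        have hpd : ((t * Real.sqrt s) • γ m + φ⁻¹).PosDef :=
          (my_posdef_smul hc hγm).add hφ.inv
        have heq : γ m + (t * Real.sqrt s)⁻¹ • φ⁻¹ =
            (t * Real.sqrt s)⁻¹ • ((t * Real.sqrt s) • γ m + φ⁻¹) := by
          rw [smul_add, smul_smul, inv_mul_cancel₀ hc.ne', one_smul]
        rw [heq, my_inv_smul hc.ne' hpd.det_pos.ne'.isUnit]
      have h1 : Tendsto (fun t : ℝ => t * Real.sqrt s)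
          (nhdsWithin 0 (Set.Ioi 0)) (nhds 0) := by
        have : Tendsto (fun t : ℝ => t * Real.sqrt s) (nhds 0) (nhds 0) := by
          simpa using (continuous_mul_right (Real.sqrt s)).tendsto (0:ℝ)
        exact this.mono_left nhdsWithin_le_nhds
      have h2 : Tendsto (fun t : ℝ => ((t * Real.sqrt s) • γ m + φ⁻¹)⁻¹)
          (nhdsWithin 0 (Set.Ioi 0)) (nhds ((φ⁻¹)⁻¹)) := by
        have hc1 : Tendsto (fun t : ℝ => (t * Real.sqrt s) • γ m + φ⁻¹)
            (nhdsWithin 0 (Set.Ioi 0)) (nhds φ⁻¹) := by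
          have : Tendsto (fun t : ℝ => (t * Real.sqrt s) • γ m + φ⁻¹)
              (nhds 0) (nhds ((0 * Real.sqrt s) • γ m + φ⁻¹)) :=
            (((continuous_id.mul continuous_const).smul continuous_const).add
              continuous_const).tendsto (0:ℝ)
          simpa using this.mono_left nhdsWithin_le_nhds
        exact (my_contAt_inv φ⁻¹ hφ.inv.det_pos.ne').tendsto.comp hc1
      have := h1.smul h2
      rw [zero_smul] at this
      refine Tendsto.congr' ?_ this
      filter_upwards [self_mem_nhdsWithin] with t ht
      exact (key t ht).symm
    have hc1 : Tendsto (fun t : ℝ => s • γhat m + (γ m + (t * Real.sqrt s)⁻¹ • φ⁻¹)⁻¹)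
        (nhdsWithin 0 (Set.Ioi 0)) (nhds (s • γhat m)) := by
      have := (tendsto_const_nhds (x := s • γhat m)
        (f := nhdsWithin (0:ℝ) (Set.Ioi 0))).add hinner
      simpa using this
    exact (my_contAt_inv (s • γhat m) (my_posdef_smul hs hγhm).det_pos.ne').tendsto.comp hc1
  -- rewrite the function on Ioi 0 using the shift lemma
  have main : Tendsto (fun t : ℝ =>
      h ((s • γhat m + (γ m + (t * Real.sqrt s)⁻¹ • φ⁻¹)⁻¹)⁻¹))
      (nhdsWithin 0 (Set.Ioi 0)) (nhds (h ((s • γhat m)⁻¹))) :=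
    hcont.tendsto.comp hD'
  have key2 : ∀ D : Matrix (Fin p) (Fin p) ℝ,
      sfracC m s γ γhat D 1 = h ((s • γhat m + (γ m + D)⁻¹)⁻¹) := by
    intro D
    show sfracTail m s γ γhat D (m + 1 - 1) = _
    have : m + 1 - 1 = (m - 1) + 1 := by omega
    rw [this, sfracTail_shift s γ γhat m hm D (m - 1)]
  have key3 : sfracC (m - 1) s γ γhat ((s • γhat m)⁻¹) 1 = h ((s • γhat m)⁻¹) := by
    show sfracTail (m - 1) s γ γhat _ (m - 1 + 1 - 1) = _
    simp [hh]
  rw [key3]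
  refine main.congr fun t => ?_
  rw [key2]
end
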